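/- arXiv:2605.09828 — 4 statements merged into one kernel-verified Lean document; each statement's English description precedes it below -/
import Mathlib

section
/- There exists a unique Lie algebra homomorphism θ : 𝔓_n → Der(𝕃_n) such that for all indices 1 ≤ i, j ≤ n with i ≠ j and all 1 ≤ k ≤ n: θ(A_{i,j})(x_k) = [x_i, x_j] if k = i, θ(A_{i,j})(x_k) = [x_j, x_i] if k = j, and θ(A_{i,j})(x_k) = 0 if k ∉ {i, j}. (In particular the assignment on generators respects the infinitesimal braid relations.) -/
/-!
A derivation of a free Lie algebra may be prescribed arbitrarily on the generators: a derivation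
`D : L → M` is the same as a Lie algebra section `a ↦ (a, D a)` of the split square-zero extension
`L ⋉ M → L`, and such sections of the free Lie algebra are given by the universal property.
This produces the derivations `D_{ij}` on `𝕃_n`. Both sides of each infinitesimal braid relation
are derivations, so the relations need only be checked on the generators `x_m`, where they reduce
to the Jacobi identity. Hence `A_{ij} ↦ D_{ij}` factors through `𝔓_n`, uniquely because the
`A_{ij}` generate `𝔓_n` and a derivation of `𝕃_n` is determined by its values on the `x_k`.
-/

open FreeLieAlgebra

/-- The free Lie algebra `𝕃_n` on generators `x_1, …, x_n`. -/
abbrev FreeLie (K : Type*) [Field K] (n : ℕ) := FreeLieAlgebra K (Fin n)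

/-- Index type for the generators `A_{i,j}` (`i ≠ j`) of the Drinfeld–Kohno Lie algebra. -/
abbrev DKGenIdx (n : ℕ) := {p : Fin n × Fin n // p.1 ≠ p.2}

/-- The set of infinitesimal braid relations inside the free Lie algebra on the `A_{i,j}`. -/
def dkRels (K : Type*) [Field K] (n : ℕ) : Set (FreeLieAlgebra K (DKGenIdx n)) :=
  (⋃ (i : Fin n) (j : Fin n) (h : i ≠ j),
      {of K (⟨(i, j), h⟩ : DKGenIdx n) - of K (⟨(j, i), h.symm⟩ : DKGenIdx n)}) ∪
  (⋃ (i : Fin n) (j : Fin n) (k : Fin n) (hij : i ≠ j) (hjk : j ≠ k) (hik : i ≠ k),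
      {⁅of K (⟨(i, k), hik⟩ : DKGenIdx n),
        of K (⟨(i, j), hij⟩ : DKGenIdx n) + of K (⟨(j, k), hjk⟩ : DKGenIdx n)⁆}) ∪
  (⋃ (i : Fin n) (j : Fin n) (k : Fin n) (l : Fin n)
      (hij : i ≠ j) (hkl : k ≠ l) (_ : i ≠ k) (_ : i ≠ l) (_ : j ≠ k) (_ : j ≠ l),
      {⁅of K (⟨(i, j), hij⟩ : DKGenIdx n), of K (⟨(k, l), hkl⟩ : DKGenIdx n)⁆})

/-- The Lie ideal generated by the infinitesimal braid relations. -/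
noncomputable def dkIdeal (K : Type*) [Field K] (n : ℕ) : LieIdeal K (FreeLieAlgebra K (DKGenIdx n)) :=
  LieSubmodule.lieSpan K _ (dkRels K n)

/-- The Drinfeld–Kohno Lie algebra `𝔓_n`. -/
abbrev DK (K : Type*) [Field K] (n : ℕ) :=
  FreeLieAlgebra K (DKGenIdx n) ⧸ dkIdeal K n

/-- The generator `A_{i,j}` of the Drinfeld–Kohno Lie algebra `𝔓_n`. -/
noncomputable def dkGen (K : Type*) [Field K] {n : ℕ} {i j : Fin n} (h : i ≠ j) : DK K n :=
  LieSubmodule.Quotient.mk (N := dkIdeal K n) (of K (⟨(i, j), h⟩ : DKGenIdx n))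

/-- The semidirect product `L ⋉ M` in which the `L`-module `M` is an abelian ideal. -/
def LieTrivSqZeroExt (L M : Type*) := L × M

namespace LieTrivSqZeroExt

section AddCommGroup

variable {L M : Type*} [AddCommGroup L] [AddCommGroup M]

instance : AddCommGroup (LieTrivSqZeroExt L M) := inferInstanceAs (AddCommGroup (L × M))

@[simp] lemma fst_add (x y : LieTrivSqZeroExt L M) : (x + y).1 = x.1 + y.1 := rfl
@[simp] lemma snd_add (x y : LieTrivSqZeroExt L M) : (x + y).2 = x.2 + y.2 := rfl

end AddCommGroup

def mk {L M : Type*} (a : L) (m : M) : LieTrivSqZeroExt L M := (a, m)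

@[simp] lemma fst_mk {L M : Type*} (a : L) (m : M) : (mk a m).1 = a := rfl
@[simp] lemma snd_mk {L M : Type*} (a : L) (m : M) : (mk a m).2 = m := rfl

lemma ext {L M : Type*} {x y : LieTrivSqZeroExt L M} (h₁ : x.1 = y.1) (h₂ : x.2 = y.2) : x = y :=
  Prod.ext h₁ h₂

section LieRing

variable {L M : Type*} [LieRing L] [AddCommGroup M] [LieRingModule L M]

instance : Bracket (LieTrivSqZeroExt L M) (LieTrivSqZeroExt L M) :=
  ⟨fun x y => (⁅x.1, y.1⁆, ⁅x.1, y.2⁆ - ⁅y.1, x.2⁆)⟩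

@[simp] lemma fst_lie (x y : LieTrivSqZeroExt L M) : (⁅x, y⁆).1 = ⁅x.1, y.1⁆ := rfl
@[simp] lemma snd_lie (x y : LieTrivSqZeroExt L M) : (⁅x, y⁆).2 = ⁅x.1, y.2⁆ - ⁅y.1, x.2⁆ := rfl

instance : LieRing (LieTrivSqZeroExt L M) where
  add_lie x y z := ext (by simp only [fst_lie, fst_add, add_lie])
    (by simp only [snd_lie, fst_add, snd_add, add_lie, lie_add]; abel)
  lie_add x y z := ext (by simp only [fst_lie, fst_add, lie_add])
    (by simp only [snd_lie, fst_add, snd_add, add_lie, lie_add]; abel)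
  lie_self x := ext (lie_self x.1) (sub_self _)
  leibniz_lie x y z := ext (leibniz_lie x.1 y.1 z.1)
    (by simp only [snd_lie, fst_lie, snd_add, lie_sub, lie_lie]; abel)

end LieRing

variable {R L M : Type*} [CommRing R] [LieRing L] [LieAlgebra R L]
  [AddCommGroup M] [Module R M] [LieRingModule L M] [LieModule R L M]

instance : Module R (LieTrivSqZeroExt L M) := inferInstanceAs (Module R (L × M))

instance : LieAlgebra R (LieTrivSqZeroExt L M) where
  lie_smul t x y := ext (lie_smul t x.1 y.1) (by
    show ⁅x.1, t • y.2⁆ - ⁅t • y.1, x.2⁆ = t • (⁅x.1, y.2⁆ - ⁅y.1, x.2⁆)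
    rw [lie_smul, smul_lie, smul_sub])

variable (R L M) in
def fstHom : LieTrivSqZeroExt L M →ₗ⁅R⁆ L where
  toFun x := x.1
  map_add' _ _ := rfl
  map_smul' _ _ := rfl
  map_lie' := rfl

end LieTrivSqZeroExt

namespace FreeLieAlgebra

variable {R X : Type*} [CommRing R]

lemma lieSpan_range_of :
    LieSubalgebra.lieSpan R _ (Set.range (of R : X → FreeLieAlgebra R X)) = ⊤ := by
  set S := LieSubalgebra.lieSpan R (FreeLieAlgebra R X) (Set.range (of R))
  let φ : FreeLieAlgebra R X →ₗ⁅R⁆ S :=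
    lift R fun x => ⟨of R x, LieSubalgebra.subset_lieSpan ⟨x, rfl⟩⟩
  have hφ : S.incl.comp φ = LieHom.id := hom_ext fun x => by simp [φ]
  refine eq_top_iff.2 fun a _ => ?_
  have hφa : (φ a : FreeLieAlgebra R X) = a := LieHom.congr_fun hφ a
  exact hφa ▸ (φ a).2

lemma lieDerivation_ext {M : Type*} [AddCommGroup M] [Module R M]
    [LieRingModule (FreeLieAlgebra R X) M] [LieModule R (FreeLieAlgebra R X) M]
    {D₁ D₂ : LieDerivation R (FreeLieAlgebra R X) M} (h : ∀ x, D₁ (of R x) = D₂ (of R x)) :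
    D₁ = D₂ :=
  LieDerivation.ext_of_lieSpan_eq_top _ (lieSpan_range_of (R := R))
    (by rintro _ ⟨x, rfl⟩; exact h x)

section LiftDerivation

variable {M : Type*} [AddCommGroup M] [Module R M]
    [LieRingModule (FreeLieAlgebra R X) M] [LieModule R (FreeLieAlgebra R X) M]

noncomputable def graphLift (f : X → M) :
    FreeLieAlgebra R X →ₗ⁅R⁆ LieTrivSqZeroExt (FreeLieAlgebra R X) M :=
  lift R fun x => .mk (of R x) (f x)

lemma fst_graphLift (f : X → M) (a : FreeLieAlgebra R X) : (graphLift f a).1 = a := by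
  have h : (LieTrivSqZeroExt.fstHom R _ M).comp (graphLift f) = LieHom.id :=
    hom_ext fun x => by rw [LieHom.comp_apply, graphLift, lift_of_apply]; rfl
  exact LieHom.congr_fun h a

noncomputable def liftDerivation (f : X → M) : LieDerivation R (FreeLieAlgebra R X) M where
  toFun a := (graphLift f a).2
  map_add' a b := by rw [map_add]; rfl
  map_smul' t a := by rw [map_smul]; rfl
  leibniz' a b := by
    simp only [LinearMap.coe_mk, AddHom.coe_mk, LieHom.map_lie, LieTrivSqZeroExt.snd_lie,
      fst_graphLift]

@[simp] lemma liftDerivation_of (f : X → M) (x : X) : liftDerivation f (of R x) = f x := by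
  show (graphLift f (of R x)).2 = f x
  rw [graphLift, lift_of_apply, LieTrivSqZeroExt.snd_mk]

end LiftDerivation

section BraidDerivation

variable (R : Type*) {X : Type*} [CommRing R] [DecidableEq X]

noncomputable def braidDerivation (i j : X) :
    LieDerivation R (FreeLieAlgebra R X) (FreeLieAlgebra R X) :=
  liftDerivation fun k => if k = i then ⁅of R i, of R j⁆ else if k = j then ⁅of R j, of R i⁆ else 0

lemma braidDerivation_of (i j k : X) :
    braidDerivation R i j (of R k) =
      if k = i then ⁅of R i, of R j⁆ else if k = j then ⁅of R j, of R i⁆ else 0 :=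
  liftDerivation_of _ _

variable {R}

@[simp] lemma braidDerivation_of_left (i j : X) :
    braidDerivation R i j (of R i) = ⁅of R i, of R j⁆ := by
  simp [braidDerivation_of]

@[simp] lemma braidDerivation_of_right {i j : X} (h : i ≠ j) :
    braidDerivation R i j (of R j) = ⁅of R j, of R i⁆ := by
  simp [braidDerivation_of, h.symm]

@[simp] lemma braidDerivation_of_of_ne {i j k : X} (hi : k ≠ i) (hj : k ≠ j) :
    braidDerivation R i j (of R k) = 0 := by
  simp [braidDerivation_of, hi, hj]

lemma braidDerivation_comm (i j : X) : braidDerivation R i j = braidDerivation R j i := by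
  refine lieDerivation_ext fun k => ?_
  simp only [braidDerivation_of]
  split_ifs <;> simp_all

lemma lie_braidDerivation_add {i j k : X} (hij : i ≠ j) (hjk : j ≠ k) (hik : i ≠ k) :
    ⁅braidDerivation R i k, braidDerivation R i j + braidDerivation R j k⁆ = 0 := by
  have hji := hij.symm; have hkj := hjk.symm; have hki := hik.symm
  refine lieDerivation_ext fun m => ?_
  rw [LieDerivation.lie_apply, LieDerivation.zero_apply]
  obtain rfl | hmi := eq_or_ne m i
  · simp [*]
  obtain rfl | hmj := eq_or_ne m j
  · simp [*]
    rw [← lie_skew (of R i) (of R k), lie_neg, neg_add_cancel]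
  obtain rfl | hmk := eq_or_ne m k
  · simp [*]
  · simp [*]

lemma lie_braidDerivation_of_disjoint {i j k l : X} (hij : i ≠ j) (hkl : k ≠ l)
    (hik : i ≠ k) (hil : i ≠ l) (hjk : j ≠ k) (hjl : j ≠ l) :
    ⁅braidDerivation R i j, braidDerivation R k l⁆ = 0 := by
  have hki := hik.symm; have hli := hil.symm; have hkj := hjk.symm; have hlj := hjl.symm
  refine lieDerivation_ext fun m => ?_
  rw [LieDerivation.lie_apply, LieDerivation.zero_apply]
  obtain rfl | hmi := eq_or_ne m i
  · simp [*]
  obtain rfl | hmj := eq_or_ne m j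
  · simp [*]
  obtain rfl | hmk := eq_or_ne m k
  · simp [*]
  obtain rfl | hml := eq_or_ne m l
  · simp [*]
  · simp [*]

end BraidDerivation

end FreeLieAlgebra

namespace LieIdeal.Quotient

variable {R L L' : Type*} [CommRing R] [LieRing L] [LieAlgebra R L] [LieRing L'] [LieAlgebra R L']
  (I : LieIdeal R L)

def mk : L →ₗ⁅R⁆ L ⧸ I :=
  { I.toSubmodule.mkQ with map_lie' := rfl }

lemma mk_surjective : Function.Surjective (mk I) :=
  Submodule.Quotient.mk_surjective _

noncomputable def lift (f : L →ₗ⁅R⁆ L') (h : I ≤ f.ker) : L ⧸ I →ₗ⁅R⁆ L' :=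
  { I.toSubmodule.liftQ f.toLinearMap fun x hx => LieHom.mem_ker.1 (h hx) with
    map_lie' := by
      intro x y
      obtain ⟨a, rfl⟩ := mk_surjective I x
      obtain ⟨b, rfl⟩ := mk_surjective I y
      exact f.map_lie a b }

lemma lift_mk (f : L →ₗ⁅R⁆ L') (h : I ≤ f.ker) (a : L) : lift I f h (mk I a) = f a := rfl

lemma hom_ext {g₁ g₂ : L ⧸ I →ₗ⁅R⁆ L'} (h : g₁.comp (mk I) = g₂.comp (mk I)) : g₁ = g₂ := by
  ext x
  obtain ⟨a, rfl⟩ := mk_surjective I x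
  exact LieHom.congr_fun h a

end LieIdeal.Quotient

section InfinitesimalBraidAction

variable (K : Type*) [Field K] (n : ℕ)

lemma dkIdeal_le_ker :
    dkIdeal K n ≤ (lift K fun p : DKGenIdx n => braidDerivation K p.1.1 p.1.2).ker := by
  refine LieSubmodule.lieSpan_le.2 ?_
  simp only [dkRels, Set.union_subset_iff, Set.iUnion_subset_iff, Set.singleton_subset_iff,
    SetLike.mem_coe, LieHom.mem_ker, map_sub, map_add, LieHom.map_lie, lift_of_apply]
  exact ⟨⟨fun i j _ => sub_eq_zero.2 (braidDerivation_comm i j),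
    fun i j k hij hjk hik => lie_braidDerivation_add hij hjk hik⟩,
    fun i j k l hij hkl hik hil hjk hjl => lie_braidDerivation_of_disjoint hij hkl hik hil hjk hjl⟩

noncomputable def infinitesimalBraidAction :
    DK K n →ₗ⁅K⁆ LieDerivation K (FreeLie K n) (FreeLie K n) :=
  LieIdeal.Quotient.lift _ _ (dkIdeal_le_ker K n)

variable {K n}

lemma infinitesimalBraidAction_dkGen {i j : Fin n} (h : i ≠ j) :
    infinitesimalBraidAction K n (dkGen K h) = braidDerivation K i j :=
  (LieIdeal.Quotient.lift_mk _ _ _ _).trans (lift_of_apply _ _)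

lemma dkHom_ext {L : Type*} [LieRing L] [LieAlgebra K L] {θ₁ θ₂ : DK K n →ₗ⁅K⁆ L}
    (h : ∀ (i j : Fin n) (hij : i ≠ j), θ₁ (dkGen K hij) = θ₂ (dkGen K hij)) : θ₁ = θ₂ :=
  LieIdeal.Quotient.hom_ext _ (hom_ext fun p => h p.1.1 p.1.2 p.2)

end InfinitesimalBraidAction

theorem exists_unique_infinitesimal_braid_action_general (K : Type*) [Field K] (n : ℕ) :
    ∃! θ : DK K n →ₗ⁅K⁆ LieDerivation K (FreeLie K n) (FreeLie K n),
      ∀ (i j : Fin n) (h : i ≠ j) (k : Fin n),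
        θ (dkGen K h) (of K k) =
          if k = i then ⁅of K i, of K j⁆
          else if k = j then ⁅of K j, of K i⁆
          else 0 := by
  refine ⟨infinitesimalBraidAction K n, fun i j h k => ?_, fun θ hθ => dkHom_ext fun i j h => ?_⟩
  · rw [infinitesimalBraidAction_dkGen, braidDerivation_of]
  · exact lieDerivation_ext fun k => by
      rw [hθ, infinitesimalBraidAction_dkGen, braidDerivation_of]

/-- There is a unique Lie algebra homomorphism
`θ : 𝔓_n → Der(𝕃_n)` with `θ(A_{i,j})(x_k) = [x_i,x_j]` if `k = i`,
`[x_j,x_i]` if `k = j`, and `0` otherwise. -/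
theorem exists_unique_infinitesimal_braid_action (K : Type*) [Field K] (n : ℕ) (hn : 2 ≤ n) :
    ∃! θ : DK K n →ₗ⁅K⁆ LieDerivation K (FreeLie K n) (FreeLie K n),
      ∀ (i j : Fin n) (h : i ≠ j) (k : Fin n),
        θ (dkGen K h) (of K k) =
          if k = i then ⁅of K i, of K j⁆
          else if k = j then ⁅of K j, of K i⁆
          else 0 :=
  exists_unique_infinitesimal_braid_action_general K n
end

section
/- Let V be a K-vector space, λ ∈ K, and ρ : 𝕃_{n+1} → End_K(V) a Lie algebra homomorphism (End_K(V) carrying the commutator bracket) such that ρ(x_{n+1}) = λ·id_V. Then for every element σ of the Lie subalgebra of 𝔓_{n+1} generated by A_{1,n+1}, …, A_{n,n+1} and every l ∈ 𝕃_{n+1}, one has ρ(Θ(σ)(l)) = 0. -/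
/-! Drinfeld–Kohno Lie algebra and the infinitesimal braid action. -/

open FreeLieAlgebra

attribute [local instance 100] LieRing.ofAssociativeRing

/-! The derivations `D` of `𝕃_{n+1}` with `ρ ∘ D = 0` form a Lie subalgebra of `Der(𝕃_{n+1})`,
because `ρ (⁅D₁, D₂⁆ l) = ρ (D₁ (D₂ l)) - ρ (D₂ (D₁ l))`, so it suffices to treat the generators
`Θ(A_{i,n+1})`. For a single derivation `D`, the `l` with `ρ (D l) = 0` form a Lie subalgebra of
`𝕃_{n+1}` by the Leibniz rule, so it suffices to treat the generators `x_k`, where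
`ρ (Θ(A_{i,n+1}) x_k)` is `0` or a bracket with the scalar `ρ(x_{n+1}) = λ·id_V`. -/

theorem FreeLieAlgebra.eq_top_of_of_mem {R X : Type*} [CommRing R]
    {S : LieSubalgebra R (FreeLieAlgebra R X)} (h : ∀ x, of R x ∈ S) : S = ⊤ := by
  let F : FreeLieAlgebra R X →ₗ⁅R⁆ S := lift R fun x => ⟨of R x, h x⟩
  have hF : S.incl.comp F = LieHom.id := hom_ext fun x => by simp [F]
  refine eq_top_iff.2 fun l _ => ?_
  rw [← LieHom.id_apply (R := R) l, ← hF]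
  exact (F l).2

namespace LieDerivation

variable {R L L' : Type*} [CommRing R] [LieRing L] [LieAlgebra R L] [LieRing L'] [LieAlgebra R L']

def comapKer (f : L →ₗ⁅R⁆ L') (D : LieDerivation R L L) : LieSubalgebra R L where
  carrier := {l | f (D l) = 0}
  zero_mem' := by simp
  add_mem' {a b} ha hb := by simp_all
  smul_mem' c a ha := by simp_all
  lie_mem' {a b} ha hb := by simp_all

def rangeInKer (f : L →ₗ⁅R⁆ L') : LieSubalgebra R (LieDerivation R L L) where
  carrier := {D | ∀ l, f (D l) = 0}
  zero_mem' := by simp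
  add_mem' {D E} hD hE l := by simp [hD l, hE l]
  smul_mem' c D hD l := by simp [hD l]
  lie_mem' {D E} hD hE l := by simp [hD (E l), hE (D l)]

theorem mem_rangeInKer_of_apply_of {X : Type*} (f : FreeLieAlgebra R X →ₗ⁅R⁆ L')
    (D : LieDerivation R (FreeLieAlgebra R X) (FreeLieAlgebra R X)) (h : ∀ x, f (D (of R x)) = 0) :
    D ∈ rangeInKer f := by
  have htop : comapKer f D = ⊤ := FreeLieAlgebra.eq_top_of_of_mem h
  exact fun l => show l ∈ comapKer f D from htop ▸ LieSubalgebra.mem_top l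

end LieDerivation

namespace LieHom

variable {K L V : Type*} [Field K] [LieRing L] [LieAlgebra K L] [AddCommGroup V] [Module K V]
  {ρ : L →ₗ⁅K⁆ Module.End K V} {y : L} {c : K}

theorem map_lie_eq_zero_of_map_right_eq_smul_one (hy : ρ y = c • 1) (x : L) : ρ ⁅x, y⁆ = 0 := by
  simp [hy, Ring.lie_def]

theorem map_lie_eq_zero_of_map_left_eq_smul_one (hy : ρ y = c • 1) (x : L) : ρ ⁅y, x⁆ = 0 := by
  simp [hy, Ring.lie_def]

end LieHom

theorem rho_comp_braid_action_eq_zero_general (K : Type*) [Field K] (n : ℕ)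
    (Θ : DK K (n + 1) →ₗ⁅K⁆ LieDerivation K (FreeLie K (n + 1)) (FreeLie K (n + 1)))
    (hΘ : ∀ (i j : Fin (n + 1)) (h : i ≠ j) (k : Fin (n + 1)),
      Θ (dkGen K h) (of K k) =
        if k = i then ⁅of K i, of K j⁆
        else if k = j then ⁅of K j, of K i⁆
        else 0)
    (V : Type*) [AddCommGroup V] [Module K V] (lam : K)
    (ρ : FreeLie K (n + 1) →ₗ⁅K⁆ Module.End K V)
    (hρ : ρ (of K (Fin.last n)) = lam • (1 : Module.End K V)) :
    ∀ σ ∈ LieSubalgebra.lieSpan K (DK K (n + 1))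
        (Set.range fun i : Fin n => dkGen K (Fin.castSucc_lt_last i).ne),
      ∀ l : FreeLie K (n + 1), ρ (Θ σ l) = 0 := by
  have hgen (i : Fin n) :
      Θ (dkGen K (Fin.castSucc_lt_last i).ne) ∈ LieDerivation.rangeInKer ρ := by
    refine LieDerivation.mem_rangeInKer_of_apply_of ρ _ fun k => ?_
    rw [hΘ]
    split_ifs with _ hkl
    · exact LieHom.map_lie_eq_zero_of_map_right_eq_smul_one hρ _
    · subst hkl
      exact LieHom.map_lie_eq_zero_of_map_left_eq_smul_one hρ _
    · exact map_zero ρ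
  intro σ hσ
  exact LieSubalgebra.lieSpan_le (K := (LieDerivation.rangeInKer ρ).comap Θ).2
    (Set.range_subset_iff.2 hgen) hσ

/-- Let `V` be a `K`-vector space, `λ ∈ K`, and
`ρ : 𝕃_{n+1} → End_K(V)` a Lie algebra homomorphism (with the commutator bracket on
`End_K(V)`) such that `ρ(x_{n+1}) = λ·id_V`.  Then for every element `σ` of the Lie
subalgebra of `𝔓_{n+1}` generated by `A_{1,n+1}, …, A_{n,n+1}`, and every
`l ∈ 𝕃_{n+1}`, one has `ρ(Θ(σ)(l)) = 0`. -/
theorem rho_comp_braid_action_eq_zero (K : Type*) [Field K] (n : ℕ) (hn : 1 ≤ n)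
    (Θ : DK K (n + 1) →ₗ⁅K⁆ LieDerivation K (FreeLie K (n + 1)) (FreeLie K (n + 1)))
    (hΘ : ∀ (i j : Fin (n + 1)) (h : i ≠ j) (k : Fin (n + 1)),
      Θ (dkGen K h) (of K k) =
        if k = i then ⁅of K i, of K j⁆
        else if k = j then ⁅of K j, of K i⁆
        else 0)
    (V : Type*) [AddCommGroup V] [Module K V] (lam : K)
    (ρ : FreeLie K (n + 1) →ₗ⁅K⁆ Module.End K V)
    (hρ : ρ (of K (Fin.last n)) = lam • (1 : Module.End K V)) :
    ∀ σ ∈ LieSubalgebra.lieSpan K (DK K (n + 1))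
        (Set.range fun i : Fin n => dkGen K (Fin.castSucc_lt_last i).ne),
      ∀ l : FreeLie K (n + 1), ρ (Θ σ l) = 0 :=
  rho_comp_braid_action_eq_zero_general K n Θ hΘ V lam ρ hρ
end

section
/- Let e : 𝕃_n → 𝔓_{n+1} be the Lie algebra homomorphism with e(x_i) = A_{i,n+1} for 1 ≤ i ≤ n, and ι : 𝔓_n → 𝔓_{n+1} the Lie algebra homomorphism with ι(A_{i,j}) = A_{i,j} for 1 ≤ i ≠ j ≤ n. Then: (i) e and ι are injective; (ii) the range of e is a Lie ideal of 𝔓_{n+1}; (iii) 𝔓_{n+1} is the direct sum of the ranges of e and ι as K-vector spaces (range e ∩ range ι = {0} and range e + range ι = 𝔓_{n+1}); (iv) the adjoint action of ι(𝔓_n) on range e is given by the infinitesimal braid action: [ι(σ), e(u)] = e(θ(σ)(u)) for all σ ∈ 𝔓_n and u ∈ 𝕃_n. -/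
/-! Drinfeld–Kohno Lie algebra and the infinitesimal braid action. -/

open FreeLieAlgebra

/-! `𝔓_{n+1}` is the semidirect sum `𝕃_n ⋊_θ 𝔓_n`. Sending `A_{i,n+1} ↦ x_i` and
`A_{i,j} ↦ A_{i,j}` respects the defining relations of `𝔓_{n+1}` (the relations involving
`n + 1` hold precisely because of the formula for `θ`), so it defines a homomorphism
`split : 𝔓_{n+1} → 𝕃_n ⋊_θ 𝔓_n` with `split ∘ e = inl` and `split ∘ ι = inr`; this gives
injectivity and `range e ∩ range ι = 0`. Conversely, the same relations read inside
`𝔓_{n+1}` say that `[ι σ, e u] = e (θ σ u)` on generators, hence everywhere, so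
`(u, σ) ↦ e u + ι σ` is a Lie homomorphism out of the semidirect sum. Its image contains every
generator, so `range e + range ι = 𝔓_{n+1}`, and `range e` is an ideal.

The index `n + 1` of the paper is `Fin.last n`. -/

open LieAlgebra

namespace FreeLieAlgebra

variable {R X : Type*} [CommRing R]

theorem lieSubalgebra_eq_top {S : LieSubalgebra R (FreeLieAlgebra R X)}
    (h : ∀ x, of R x ∈ S) : S = ⊤ := by
  have hid : S.incl.comp (lift R fun x => ⟨of R x, h x⟩) = LieHom.id := hom_ext fun x => by simp
  refine eq_top_iff.2 fun z _ => ?_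
  have hz := LieHom.congr_fun hid z
  rw [LieHom.comp_apply, LieHom.id_apply] at hz
  exact hz ▸ Subtype.property _

end FreeLieAlgebra

namespace LieIdeal

variable {R L L' : Type*} [CommRing R] [LieRing L] [LieAlgebra R L] [LieRing L'] [LieAlgebra R L']
  (I : LieIdeal R L)

def mkQ : L →ₗ⁅R⁆ L ⧸ I :=
  { I.toSubmodule.mkQ with map_lie' := rfl }

theorem mkQ_surjective : Function.Surjective I.mkQ :=
  Quot.mk_surjective

def liftQ (f : L →ₗ⁅R⁆ L') (h : I ≤ f.ker) : L ⧸ I →ₗ⁅R⁆ L' :=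
  { I.toSubmodule.liftQ f.toLinearMap fun _ hx => f.mem_ker.1 (h hx) with
    map_lie' := by
      rintro ⟨x⟩ ⟨y⟩
      exact f.map_lie x y }

theorem hom_ext_mkQ {f g : L ⧸ I →ₗ⁅R⁆ L'} (h : f.comp I.mkQ = g.comp I.mkQ) : f = g := by
  ext z
  obtain ⟨x, rfl⟩ := I.mkQ_surjective z
  exact LieHom.congr_fun h x

end LieIdeal

namespace LieAlgebra.SemiDirectSum

variable {R M P L : Type*} [CommRing R] [LieRing M] [LieAlgebra R M] [LieRing P] [LieAlgebra R P]
  [LieRing L] [LieAlgebra R L] {θ : P →ₗ⁅R⁆ LieDerivation R M M}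

theorem inr_injective : Function.Injective (inr θ) := by
  intro x y h
  simpa using congrArg SemiDirectSum.right h

def lift (e : M →ₗ⁅R⁆ L) (ι : P →ₗ⁅R⁆ L) (h : ∀ σ u, ⁅ι σ, e u⁆ = e (θ σ u)) :
    M ⋊⁅θ⁆ P →ₗ⁅R⁆ L where
  toFun x := e x.left + ι x.right
  map_add' x y := by simp only [add_eq_mk, map_add]; abel
  map_smul' c x := by simp
  map_lie' {x y} := by
    simp only [lie_eq_mk, map_add, map_sub, LieHom.map_lie, add_lie, lie_add, h,
      ← lie_skew (e x.left) (ι y.right)]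
    abel

@[simp]
theorem lift_apply (e : M →ₗ⁅R⁆ L) (ι : P →ₗ⁅R⁆ L) (h : ∀ σ u, ⁅ι σ, e u⁆ = e (θ σ u))
    (x : M ⋊⁅θ⁆ P) : lift e ι h x = e x.left + ι x.right :=
  rfl

end LieAlgebra.SemiDirectSum

namespace LieHom

variable {R M P L : Type*} [CommRing R] [LieRing M] [LieAlgebra R M] [LieRing P] [LieAlgebra R P]
  [LieRing L] [LieAlgebra R L]

def adEqLocus (e : M →ₗ⁅R⁆ L) (x : L) (D : LieDerivation R M M) : LieSubalgebra R M where
  carrier := {u | ⁅x, e u⁆ = e (D u)}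
  add_mem' {u v} hu hv := by simp_all [lie_add]
  zero_mem' := by simp
  smul_mem' c u hu := by simp_all
  lie_mem' {u v} hu hv := by
    simp only [Set.mem_ofPred_eq] at hu hv ⊢
    rw [LieHom.map_lie, leibniz_lie, hu, hv, LieDerivation.apply_lie_eq_add, map_add, map_lie,
      map_lie]
    abel

def actionEqLocus (e : M →ₗ⁅R⁆ L) (ι : P →ₗ⁅R⁆ L) (θ : P →ₗ⁅R⁆ LieDerivation R M M) :
    LieSubalgebra R P where
  carrier := {σ | ∀ u, ⁅ι σ, e u⁆ = e (θ σ u)}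
  add_mem' {σ τ} hσ hτ u := by simp_all [add_lie]
  zero_mem' u := by simp
  smul_mem' c σ hσ u := by simp_all
  lie_mem' {σ τ} hσ hτ u := by
    simp only [Set.mem_ofPred_eq] at hσ hτ
    rw [LieHom.map_lie, lie_lie, hσ, hτ, hσ, hτ, LieHom.map_lie, LieDerivation.lie_apply, map_sub]

end LieHom

namespace DK

variable {K : Type*} [Field K] {m : ℕ} {L : Type*} [LieRing L] [LieAlgebra K L]

theorem hom_ext {f g : DK K m →ₗ⁅K⁆ L}
    (h : ∀ (i j : Fin m) (hij : i ≠ j), f (dkGen K hij) = g (dkGen K hij)) : f = g :=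
  LieIdeal.hom_ext_mkQ _ <| FreeLieAlgebra.hom_ext fun ⟨(i, j), hij⟩ => h i j hij

theorem lieSubalgebra_eq_top {S : LieSubalgebra K (DK K m)}
    (h : ∀ (i j : Fin m) (hij : i ≠ j), dkGen K hij ∈ S) : S = ⊤ := by
  have hfree : S.comap (dkIdeal K m).mkQ = ⊤ :=
    FreeLieAlgebra.lieSubalgebra_eq_top fun ⟨(i, j), hij⟩ => h i j hij
  refine eq_top_iff.2 fun z _ => ?_
  obtain ⟨x, rfl⟩ := (dkIdeal K m).mkQ_surjective z
  exact hfree.ge (LieSubalgebra.mem_top x)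

theorem mkQ_eq_zero_of_mem_dkRels {r : FreeLieAlgebra K (DKGenIdx m)} (hr : r ∈ dkRels K m) :
    (dkIdeal K m).mkQ r = 0 :=
  (LieSubmodule.Quotient.mk_eq_zero').2 (LieSubmodule.subset_lieSpan hr)

theorem dkGen_symm {i j : Fin m} (h : i ≠ j) : dkGen K h = dkGen K h.symm :=
  sub_eq_zero.1 <| mkQ_eq_zero_of_mem_dkRels <| by
    simp only [dkRels, Set.mem_union, Set.mem_iUnion, Set.mem_singleton_iff]
    exact Or.inl (Or.inl ⟨i, j, h, rfl⟩)

theorem lie_dkGen_add_dkGen {i j k : Fin m} (hij : i ≠ j) (hjk : j ≠ k) (hik : i ≠ k) :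
    ⁅dkGen K hik, dkGen K hij + dkGen K hjk⁆ = 0 :=
  mkQ_eq_zero_of_mem_dkRels <| by
    simp only [dkRels, Set.mem_union, Set.mem_iUnion, Set.mem_singleton_iff]
    exact Or.inl (Or.inr ⟨i, j, k, hij, hjk, hik, rfl⟩)

theorem lie_dkGen_dkGen_of_disjoint {i j k l : Fin m} (hij : i ≠ j) (hkl : k ≠ l)
    (hik : i ≠ k) (hil : i ≠ l) (hjk : j ≠ k) (hjl : j ≠ l) :
    ⁅dkGen K hij, dkGen K hkl⁆ = 0 :=
  mkQ_eq_zero_of_mem_dkRels <| by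
    simp only [dkRels, Set.mem_union, Set.mem_iUnion, Set.mem_singleton_iff]
    exact Or.inr ⟨i, j, k, l, hij, hkl, hik, hil, hjk, hjl, rfl⟩

theorem lie_dkGen_dkGen_eq_lie {i j k : Fin m} (hij : i ≠ j) (hjk : j ≠ k) (hik : i ≠ k) :
    ⁅dkGen K hij, dkGen K hik⁆ = ⁅dkGen K hik, dkGen K hjk⁆ := by
  rw [← lie_skew, neg_eq_iff_add_eq_zero, ← lie_add]
  exact lie_dkGen_add_dkGen hij hjk hik

section Lift

variable (g : ∀ {i j : Fin m}, i ≠ j → L)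
  (hsymm : ∀ {i j : Fin m} (h : i ≠ j), g h = g h.symm)
  (hrel : ∀ {i j k : Fin m} (hij : i ≠ j) (hjk : j ≠ k) (hik : i ≠ k),
    ⁅g hik, g hij + g hjk⁆ = 0)
  (hcomm : ∀ {i j k l : Fin m} (hij : i ≠ j) (hkl : k ≠ l),
    i ≠ k → i ≠ l → j ≠ k → j ≠ l → ⁅g hij, g hkl⁆ = 0)

noncomputable def lift : DK K m →ₗ⁅K⁆ L :=
  (dkIdeal K m).liftQ (FreeLieAlgebra.lift K fun p => g p.2) <| LieSubmodule.lieSpan_le.2 <| by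
    rintro r ((hr | hr) | hr) <;>
      simp only [Set.mem_iUnion, Set.mem_singleton_iff] at hr
    · obtain ⟨i, j, h, rfl⟩ := hr
      simp [hsymm h]
    · obtain ⟨i, j, k, hij, hjk, hik, rfl⟩ := hr
      simpa [lie_add] using hrel hij hjk hik
    · obtain ⟨i, j, k, l, hij, hkl, hik, hil, hjk, hjl, rfl⟩ := hr
      simp [hcomm hij hkl hik hil hjk hjl]

@[simp]
theorem lift_dkGen {i j : Fin m} (h : i ≠ j) : lift g hsymm hrel hcomm (dkGen K h) = g h :=
  lift_of_apply (R := K) _ _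

end Lift

end DK

open Fin LieAlgebra.SemiDirectSum

section InfBraidAction

variable {K : Type*} [Field K] {n : ℕ}
  (θ : DK K n →ₗ⁅K⁆ LieDerivation K (FreeLie K n) (FreeLie K n))

def IsInfBraidAction : Prop :=
  ∀ (i j : Fin n) (h : i ≠ j) (k : Fin n),
    θ (dkGen K h) (of K k) =
      if k = i then ⁅of K i, of K j⁆ else if k = j then ⁅of K j, of K i⁆ else 0

variable {θ} {i j k : Fin n}

theorem IsInfBraidAction.apply_left (hθ : IsInfBraidAction θ) (h : i ≠ j) :
    θ (dkGen K h) (of K i) = ⁅of K i, of K j⁆ := by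
  simpa using hθ i j h i

theorem IsInfBraidAction.apply_right (hθ : IsInfBraidAction θ) (h : i ≠ j) :
    θ (dkGen K h) (of K j) = ⁅of K j, of K i⁆ := by
  simpa [h.symm] using hθ i j h j

theorem IsInfBraidAction.apply_of_ne (hθ : IsInfBraidAction θ) (h : i ≠ j) (hki : k ≠ i)
    (hkj : k ≠ j) : θ (dkGen K h) (of K k) = 0 := by
  simpa [hki, hkj] using hθ i j h k

end InfBraidAction

namespace DK

section Splitting

variable {K : Type*} [Field K] {n : ℕ}
  (θ : DK K n →ₗ⁅K⁆ LieDerivation K (FreeLie K n) (FreeLie K n))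

noncomputable def splitGen {a b : Fin (n + 1)} (h : a ≠ b) : FreeLie K n ⋊⁅θ⁆ DK K n :=
  if ha : a = last n then inl θ (of K (b.castPred (ha ▸ h.symm)))
  else if hb : b = last n then inl θ (of K (a.castPred ha))
  else inr θ (dkGen K (show a.castPred ha ≠ b.castPred hb from fun hab => h (castPred_inj.1 hab)))

@[simp]
theorem splitGen_castSucc_castSucc {i j : Fin n} (h : castSucc i ≠ castSucc j) :
    splitGen θ h = inr θ (dkGen K ((castSucc_injective n).ne_iff.1 h)) := by
  simp [splitGen, (castSucc_lt_last i).ne, (castSucc_lt_last j).ne]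

@[simp]
theorem splitGen_castSucc_last {i : Fin n} (h : castSucc i ≠ last n) :
    splitGen θ h = inl θ (of K i) := by
  simp [splitGen, h]

@[simp]
theorem splitGen_last_castSucc {j : Fin n} (h : last n ≠ castSucc j) :
    splitGen θ h = inl θ (of K j) := by
  simp [splitGen]

theorem splitGen_symm {a b : Fin (n + 1)} (h : a ≠ b) : splitGen θ h = splitGen θ h.symm := by
  rcases eq_castSucc_or_eq_last a with ⟨i, rfl⟩ | rfl <;>
    rcases eq_castSucc_or_eq_last b with ⟨j, rfl⟩ | rfl
  · simp [dkGen_symm ((castSucc_injective n).ne_iff.1 h)]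
  all_goals simp_all

variable {θ}

theorem lie_splitGen_add_splitGen (hθ : IsInfBraidAction θ) {a b c : Fin (n + 1)}
    (hab : a ≠ b) (hbc : b ≠ c) (hac : a ≠ c) :
    ⁅splitGen θ hac, splitGen θ hab + splitGen θ hbc⁆ = 0 := by
  rcases eq_castSucc_or_eq_last a with ⟨i, rfl⟩ | rfl <;>
    rcases eq_castSucc_or_eq_last b with ⟨j, rfl⟩ | rfl <;>
    rcases eq_castSucc_or_eq_last c with ⟨k, rfl⟩ | rfl <;>
    simp only [ne_eq, not_true_eq_false] at hab hbc hac
  · ext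
    · simp
    · simp only [splitGen_castSucc_castSucc, add_eq_mk, lie_eq_mk, inr_eq_mk, add_zero]
      exact lie_dkGen_add_dkGen (K := K) _ _ _
  · ext <;> simp [hθ.apply_left]
  · ext
    · simp [hθ.apply_left, hθ.apply_right]
      rw [← lie_skew (of K k) (of K i), add_neg_cancel]
    · simp
  · ext <;> simp [hθ.apply_right]

theorem lie_splitGen_splitGen_of_disjoint (hθ : IsInfBraidAction θ) {a b c d : Fin (n + 1)}
    (hab : a ≠ b) (hcd : c ≠ d) (hac : a ≠ c) (had : a ≠ d) (hbc : b ≠ c) (hbd : b ≠ d) :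
    ⁅splitGen θ hab, splitGen θ hcd⁆ = 0 := by
  rcases eq_castSucc_or_eq_last a with ⟨i, rfl⟩ | rfl <;>
    rcases eq_castSucc_or_eq_last b with ⟨j, rfl⟩ | rfl <;>
    rcases eq_castSucc_or_eq_last c with ⟨k, rfl⟩ | rfl <;>
    rcases eq_castSucc_or_eq_last d with ⟨l, rfl⟩ | rfl <;>
    simp only [ne_eq, not_true_eq_false, castSucc_inj] at hab hcd hac had hbc hbd
  · ext
    · simp
    · simp only [splitGen_castSucc_castSucc, lie_eq_mk, inr_eq_mk]
      exact lie_dkGen_dkGen_of_disjoint (K := K) _ _ hac had hbc hbd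
  all_goals ext <;> simp [hθ.apply_of_ne, hac, had, hbc, hbd, Ne.symm hac, Ne.symm had,
    Ne.symm hbc, Ne.symm hbd]

noncomputable def split (hθ : IsInfBraidAction θ) : DK K (n + 1) →ₗ⁅K⁆ FreeLie K n ⋊⁅θ⁆ DK K n :=
  lift (splitGen θ) (splitGen_symm θ) (lie_splitGen_add_splitGen hθ)
    (lie_splitGen_splitGen_of_disjoint hθ)

end Splitting

section Decomposition

variable {K : Type*} [Field K] {n : ℕ}
  {θ : DK K n →ₗ⁅K⁆ LieDerivation K (FreeLie K n) (FreeLie K n)}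
  {e : FreeLie K n →ₗ⁅K⁆ DK K (n + 1)} {ι : DK K n →ₗ⁅K⁆ DK K (n + 1)}

theorem split_comp_eq_inl (hθ : IsInfBraidAction θ)
    (he : ∀ i : Fin n, e (of K i) = dkGen K (castSucc_lt_last i).ne) :
    (split hθ).comp e = inl θ :=
  FreeLieAlgebra.hom_ext fun i => by simp [split, he]

theorem split_comp_eq_inr (hθ : IsInfBraidAction θ)
    (hι : ∀ (i j : Fin n) (h : i ≠ j), ι (dkGen K h) = dkGen K ((castSucc_injective n).ne h)) :
    (split hθ).comp ι = inr θ :=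
  hom_ext fun i j h => by simp [split, hι]

theorem lie_apply_eq_apply_derivation (hθ : IsInfBraidAction θ)
    (he : ∀ i : Fin n, e (of K i) = dkGen K (castSucc_lt_last i).ne)
    (hι : ∀ (i j : Fin n) (h : i ≠ j), ι (dkGen K h) = dkGen K ((castSucc_injective n).ne h))
    (σ : DK K n) (u : FreeLie K n) : ⁅ι σ, e u⁆ = e (θ σ u) := by
  suffices e.actionEqLocus ι θ = ⊤ from this.ge (LieSubalgebra.mem_top σ) u
  refine lieSubalgebra_eq_top fun i j hij => ?_
  suffices e.adEqLocus (ι (dkGen K hij)) (θ (dkGen K hij)) = ⊤ from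
    fun u => this.ge (LieSubalgebra.mem_top u)
  refine FreeLieAlgebra.lieSubalgebra_eq_top fun k => ?_
  show ⁅ι (dkGen K hij), e (of K k)⁆ = e (θ (dkGen K hij) (of K k))
  rw [hι, he]
  rcases eq_or_ne k i with rfl | hki
  · rw [hθ.apply_left, e.map_lie, he, he]
    exact lie_dkGen_dkGen_eq_lie _ (castSucc_lt_last j).ne (castSucc_lt_last k).ne
  rcases eq_or_ne k j with rfl | hkj
  · rw [hθ.apply_right, e.map_lie, he, he, dkGen_symm ((castSucc_injective n).ne hij)]
    exact lie_dkGen_dkGen_eq_lie _ (castSucc_lt_last i).ne (castSucc_lt_last k).ne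
  · rw [hθ.apply_of_ne hij hki hkj, map_zero]
    exact lie_dkGen_dkGen_of_disjoint _ _ ((castSucc_injective n).ne hki.symm)
      (castSucc_lt_last i).ne ((castSucc_injective n).ne hkj.symm) (castSucc_lt_last j).ne

theorem dkGen_mem_range_or_mem_range
    (he : ∀ i : Fin n, e (of K i) = dkGen K (castSucc_lt_last i).ne)
    (hι : ∀ (i j : Fin n) (h : i ≠ j), ι (dkGen K h) = dkGen K ((castSucc_injective n).ne h))
    {a b : Fin (n + 1)} (h : a ≠ b) : dkGen K h ∈ e.range ∨ dkGen K h ∈ ι.range := by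
  rcases eq_castSucc_or_eq_last a with ⟨i, rfl⟩ | rfl <;>
    rcases eq_castSucc_or_eq_last b with ⟨j, rfl⟩ | rfl
  · exact Or.inr ⟨_, hι i j ((castSucc_injective n).ne_iff.1 h)⟩
  · exact Or.inl ⟨_, he i⟩
  · exact Or.inl ⟨_, (he j).trans (dkGen_symm _)⟩
  · exact absurd rfl h

theorem exists_apply_add_apply_eq (hθ : IsInfBraidAction θ)
    (he : ∀ i : Fin n, e (of K i) = dkGen K (castSucc_lt_last i).ne)
    (hι : ∀ (i j : Fin n) (h : i ≠ j), ι (dkGen K h) = dkGen K ((castSucc_injective n).ne h))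
    (z : DK K (n + 1)) : ∃ u σ, e u + ι σ = z := by
  let Ψ := SemiDirectSum.lift e ι (lie_apply_eq_apply_derivation hθ he hι)
  have hΨ : Ψ.range = ⊤ := by
    refine lieSubalgebra_eq_top fun a b h => ?_
    rcases dkGen_mem_range_or_mem_range he hι h with ⟨u, hu⟩ | ⟨σ, hσ⟩
    · exact ⟨inl θ u, by simpa [Ψ] using hu⟩
    · exact ⟨inr θ σ, by simpa [Ψ] using hσ⟩
  obtain ⟨x, hx⟩ := hΨ.ge (LieSubalgebra.mem_top z)
  exact ⟨x.left, x.right, hx⟩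

end Decomposition

end DK

theorem DK_semidirect_sum_decomposition_general (K : Type*) [Field K] (n : ℕ)
    (e : FreeLie K n →ₗ⁅K⁆ DK K (n + 1))
    (he : ∀ i : Fin n, e (of K i) = dkGen K (Fin.castSucc_lt_last i).ne)
    (ι : DK K n →ₗ⁅K⁆ DK K (n + 1))
    (hι : ∀ (i j : Fin n) (h : i ≠ j),
      ι (dkGen K h) = dkGen K ((Fin.castSucc_injective n).ne h))
    (θ : DK K n →ₗ⁅K⁆ LieDerivation K (FreeLie K n) (FreeLie K n))
    (hθ : ∀ (i j : Fin n) (h : i ≠ j) (k : Fin n),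
      θ (dkGen K h) (of K k) =
        if k = i then ⁅of K i, of K j⁆
        else if k = j then ⁅of K j, of K i⁆
        else 0) :
    Function.Injective e ∧ Function.Injective ι ∧
    (∀ z : DK K (n + 1), ∀ y ∈ e.range, ⁅z, y⁆ ∈ e.range) ∧
    (LinearMap.range e.toLinearMap ⊓ LinearMap.range ι.toLinearMap = ⊥) ∧
    (LinearMap.range e.toLinearMap ⊔ LinearMap.range ι.toLinearMap = ⊤) ∧
    (∀ (σ : DK K n) (u : FreeLie K n), ⁅ι σ, e u⁆ = e (θ σ u)) := by
  have hsplit_e := DK.split_comp_eq_inl hθ he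
  have hsplit_ι := DK.split_comp_eq_inr hθ hι
  have hcompat := DK.lie_apply_eq_apply_derivation hθ he hι
  have hdecomp := DK.exists_apply_add_apply_eq hθ he hι
  refine ⟨?_, ?_, ?_, ?_, ?_, hcompat⟩
  · exact Function.Injective.of_comp (f := DK.split hθ) <| by
      rw [← LieHom.coe_comp, hsplit_e]; exact inl_injective θ
  · exact Function.Injective.of_comp (f := DK.split hθ) <| by
      rw [← LieHom.coe_comp, hsplit_ι]; exact inr_injective
  · intro z y hy
    obtain ⟨v, rfl⟩ := (e.mem_range y).1 hy
    obtain ⟨u, σ, rfl⟩ := hdecomp z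
    rw [add_lie, ← e.map_lie, hcompat, ← map_add]
    exact e.mem_range_self _
  · refine (Submodule.eq_bot_iff _).2 ?_
    rintro _ ⟨⟨u, rfl⟩, σ, hσ⟩
    have h : inr θ σ = inl θ u := by
      rw [← LieHom.congr_fun hsplit_e, ← LieHom.congr_fun hsplit_ι]
      exact congrArg (DK.split hθ) hσ
    have hu : u = 0 := by simpa using (congrArg SemiDirectSum.left h).symm
    simp [hu]
  · refine eq_top_iff.2 fun z _ => ?_
    obtain ⟨u, σ, rfl⟩ := hdecomp z
    exact Submodule.add_mem_sup ⟨u, rfl⟩ ⟨σ, rfl⟩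

/-- Let `e : 𝕃_n → 𝔓_{n+1}` be the Lie algebra homomorphism with
`e(x_i) = A_{i,n+1}` and `ι : 𝔓_n → 𝔓_{n+1}` the one with `ι(A_{i,j}) = A_{i,j}`.
Then (i) `e` and `ι` are injective; (ii) the range of `e` is a Lie ideal of `𝔓_{n+1}`;
(iii) `𝔓_{n+1}` is the direct sum of the ranges of `e` and `ι` as `K`-vector spaces;
(iv) `[ι(σ), e(u)] = e(θ(σ)(u))` for all `σ ∈ 𝔓_n`, `u ∈ 𝕃_n`. -/
theorem DK_semidirect_sum_decomposition (K : Type*) [Field K] (n : ℕ) (hn : 2 ≤ n)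
    (e : FreeLie K n →ₗ⁅K⁆ DK K (n + 1))
    (he : ∀ i : Fin n, e (of K i) = dkGen K (Fin.castSucc_lt_last i).ne)
    (ι : DK K n →ₗ⁅K⁆ DK K (n + 1))
    (hι : ∀ (i j : Fin n) (h : i ≠ j),
      ι (dkGen K h) = dkGen K ((Fin.castSucc_injective n).ne h))
    (θ : DK K n →ₗ⁅K⁆ LieDerivation K (FreeLie K n) (FreeLie K n))
    (hθ : ∀ (i j : Fin n) (h : i ≠ j) (k : Fin n),
      θ (dkGen K h) (of K k) =
        if k = i then ⁅of K i, of K j⁆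
        else if k = j then ⁅of K j, of K i⁆
        else 0) :
    Function.Injective e ∧ Function.Injective ι ∧
    (∀ z : DK K (n + 1), ∀ y ∈ e.range, ⁅z, y⁆ ∈ e.range) ∧
    (LinearMap.range e.toLinearMap ⊓ LinearMap.range ι.toLinearMap = ⊥) ∧
    (LinearMap.range e.toLinearMap ⊔ LinearMap.range ι.toLinearMap = ⊤) ∧
    (∀ (σ : DK K n) (u : FreeLie K n), ⁅ι σ, e u⁆ = e (θ σ u)) :=
  DK_semidirect_sum_decomposition_general K n e he ι hι θ hθ
end

section
/- The Y-closure 𝒜̄^Y is a Y-closed arrangement containing 𝒜, and it is the minimal such arrangement: every finite Y-closed set 𝒝 of affine hyperplanes in ℂ^l with 𝒜 ⊆ 𝒝 satisfies 𝒜̄^Y ⊆ 𝒝. In particular, 𝒜̄^Y is the unique minimal Y-closed arrangement containing 𝒜. -/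
/-! Hyperplane arrangements in `ℂ^l`, `Y`-closedness and the `Y`-closure. -/

/-- The codimension of an affine subspace of `ℂ^l`, as the dimension of the quotient of
the ambient space by its direction. -/
noncomputable def affCodim {l : ℕ} (X : AffineSubspace ℂ (Fin l → ℂ)) : ℕ :=
  Module.finrank ℂ ((Fin l → ℂ) ⧸ X.direction)

/-- An affine hyperplane in `ℂ^l`: a nonempty affine subspace of codimension `1`. -/
def IsAffHyperplane {l : ℕ} (H : AffineSubspace ℂ (Fin l → ℂ)) : Prop :=
  (H : Set (Fin l → ℂ)).Nonempty ∧ affCodim H = 1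

/-- The intersection poset `L(𝒜)`: all nonempty intersections of nonempty subfamilies
of `𝒜`. -/
def interPoset {l : ℕ} (A : Set (AffineSubspace ℂ (Fin l → ℂ))) :
    Set (AffineSubspace ℂ (Fin l → ℂ)) :=
  {X | (X : Set (Fin l → ℂ)).Nonempty ∧
    ∃ S : Set (AffineSubspace ℂ (Fin l → ℂ)), S ⊆ A ∧ S.Nonempty ∧
      (X : Set (Fin l → ℂ)) = ⋂ H ∈ S, (H : Set (Fin l → ℂ))}

/-- `L_2(𝒜)`: the codimension-two elements of the intersection poset. -/
def interPoset2 {l : ℕ} (A : Set (AffineSubspace ℂ (Fin l → ℂ))) :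
    Set (AffineSubspace ℂ (Fin l → ℂ)) :=
  {X ∈ interPoset A | affCodim X = 2}

/-- The set `X + Y = {x + y : x ∈ X, y ∈ Y}` for an affine subspace `X` and a linear
subspace `Y` of `ℂ^l`. -/
def affSumSet {l : ℕ} (X : AffineSubspace ℂ (Fin l → ℂ)) (Y : Submodule ℂ (Fin l → ℂ)) :
    Set (Fin l → ℂ) :=
  {z | ∃ x ∈ (X : Set (Fin l → ℂ)), ∃ y ∈ (Y : Set (Fin l → ℂ)), z = x + y}

/-- `𝒜` is `Y`-closed if `X + Y ∈ L(𝒜)` for every `X ∈ L_2(𝒜)`. -/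
def IsYClosed {l : ℕ} (A : Set (AffineSubspace ℂ (Fin l → ℂ)))
    (Y : Submodule ℂ (Fin l → ℂ)) : Prop :=
  ∀ X ∈ interPoset2 A, ∃ W ∈ interPoset A, (W : Set (Fin l → ℂ)) = affSumSet X Y

/-- The `Y`-closure `𝒜̄^Y = 𝒜 ∪ {X + Y : X ∈ L_2(𝒜), X + Y of codimension 1}`. -/
def YClosure {l : ℕ} (A : Set (AffineSubspace ℂ (Fin l → ℂ)))
    (Y : Submodule ℂ (Fin l → ℂ)) : Set (AffineSubspace ℂ (Fin l → ℂ)) :=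
  A ∪ {H | affCodim H = 1 ∧ ∃ X ∈ interPoset2 A, (H : Set (Fin l → ℂ)) = affSumSet X Y}

/- ### Auxiliary lemmas -/

lemma eq_of_le_of_affCodim_eq {l : ℕ} {U V : AffineSubspace ℂ (Fin l → ℂ)}
    (hne : (U : Set (Fin l → ℂ)).Nonempty) (hle : U ≤ V)
    (h : affCodim U = affCodim V) : U = V := by
  have hd : U.direction ≤ V.direction := AffineSubspace.direction_le hle
  have h1 := Submodule.finrank_quotient_add_finrank U.direction
  have h2 := Submodule.finrank_quotient_add_finrank V.direction
  have hfr : Module.finrank ℂ U.direction = Module.finrank ℂ V.direction := by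
    unfold affCodim at h; omega
  have hdir : U.direction = V.direction := Submodule.eq_of_le_of_finrank_eq hd hfr
  apply AffineSubspace.ext_of_direction_eq hdir
  obtain ⟨p, hp⟩ := hne
  exact ⟨p, hp, hle hp⟩

lemma affSumSet_eq_mk' {l : ℕ} {X : AffineSubspace ℂ (Fin l → ℂ)}
    {Y : Submodule ℂ (Fin l → ℂ)} {p : Fin l → ℂ} (hp : p ∈ X) :
    affSumSet X Y = (AffineSubspace.mk' p (X.direction ⊔ Y) : Set (Fin l → ℂ)) := by
  ext z
  simp only [affSumSet, Set.mem_setOf_eq, SetLike.mem_coe,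
    AffineSubspace.mem_mk']
  constructor
  · rintro ⟨x, hx, y, hy, rfl⟩
    have h : x + y -ᵥ p = (x -ᵥ p) + y := by simp [vsub_eq_sub]; ring
    rw [h]
    exact Submodule.add_mem _
      (Submodule.mem_sup_left (AffineSubspace.vsub_mem_direction hx hp))
      (Submodule.mem_sup_right hy)
  · intro hz
    obtain ⟨d, hd, y, hy, hdy⟩ := Submodule.mem_sup.mp hz
    refine ⟨d +ᵥ p, AffineSubspace.vadd_mem_of_mem_direction hd hp, y, hy, ?_⟩
    rw [vsub_eq_sub] at hdy
    rw [vadd_eq_add]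
    linear_combination -hdy

lemma affSumSet_eq_self {l : ℕ} {X : AffineSubspace ℂ (Fin l → ℂ)}
    {Y : Submodule ℂ (Fin l → ℂ)} {p : Fin l → ℂ} (hp : p ∈ X)
    (hYle : Y ≤ X.direction) : affSumSet X Y = (X : Set (Fin l → ℂ)) := by
  rw [affSumSet_eq_mk' hp, sup_eq_left.mpr hYle, AffineSubspace.mk'_eq hp]

lemma finrank_quot_sup {l : ℕ} {D Y : Submodule ℂ (Fin l → ℂ)}
    (hD : Module.finrank ℂ ((Fin l → ℂ) ⧸ D) = 2) (hY : Module.finrank ℂ Y = 1)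
    (hn : ¬ Y ≤ D) : Module.finrank ℂ ((Fin l → ℂ) ⧸ (D ⊔ Y)) = 1 := by
  have hlt : (Y ⊓ D : Submodule ℂ (Fin l → ℂ)) < Y :=
    lt_of_le_of_ne inf_le_left (fun h => hn (by rw [← h]; exact inf_le_right))
  have hfin := Submodule.finrank_lt_finrank_of_lt hlt
  have hsup := Submodule.finrank_sup_add_finrank_inf_eq Y D
  have h1 := Submodule.finrank_quotient_add_finrank D
  have h2 := Submodule.finrank_quotient_add_finrank (D ⊔ Y)
  rw [sup_comm Y D] at hsup
  omega

lemma mem_of_interPoset_codim_one {l : ℕ} {B : Set (AffineSubspace ℂ (Fin l → ℂ))}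
    (hB : ∀ H ∈ B, IsAffHyperplane H) {X : AffineSubspace ℂ (Fin l → ℂ)}
    (hX : X ∈ interPoset B) (hco : affCodim X = 1) : X ∈ B := by
  obtain ⟨hne, S, hSB, ⟨K, hK⟩, hXeq⟩ := hX
  have hle : X ≤ K := by
    intro z hz
    have hz' : z ∈ ⋂ H ∈ S, (H : Set (Fin l → ℂ)) := by rw [← hXeq]; exact hz
    exact Set.mem_iInter₂.mp hz' K hK
  have heq : X = K :=
    eq_of_le_of_affCodim_eq hne hle (by rw [hco, (hB K (hSB hK)).2])
  rw [heq]; exact hSB hK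

lemma Y_le_direction_of_affSumSet {l : ℕ} {H X : AffineSubspace ℂ (Fin l → ℂ)}
    {Y : Submodule ℂ (Fin l → ℂ)} (hHeq : (H : Set (Fin l → ℂ)) = affSumSet X Y)
    {x0 : Fin l → ℂ} (hx0 : x0 ∈ X) : Y ≤ H.direction := by
  intro y hy
  have hx0H : x0 ∈ H := by
    rw [← SetLike.mem_coe, hHeq]
    exact ⟨x0, hx0, 0, Y.zero_mem, (add_zero x0).symm⟩
  have hx0yH : x0 + y ∈ H := by
    rw [← SetLike.mem_coe, hHeq]
    exact ⟨x0, hx0, y, hy, rfl⟩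
  have h := AffineSubspace.vsub_mem_direction hx0yH hx0H
  simpa [vsub_eq_sub] using h

lemma interPoset_finite {l : ℕ} {A : Set (AffineSubspace ℂ (Fin l → ℂ))}
    (hAfin : A.Finite) : (interPoset A).Finite := by
  have h1 : ({S | S ⊆ A} : Set (Set (AffineSubspace ℂ (Fin l → ℂ)))).Finite :=
    hAfin.finite_subsets
  have h2 : ((fun S : Set (AffineSubspace ℂ (Fin l → ℂ)) =>
      ⋂ H ∈ S, (H : Set (Fin l → ℂ))) '' {S | S ⊆ A}).Finite := h1.image _
  have h3 : ((fun X : AffineSubspace ℂ (Fin l → ℂ) => (X : Set (Fin l → ℂ))) ⁻¹'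
      ((fun S : Set (AffineSubspace ℂ (Fin l → ℂ)) =>
      ⋂ H ∈ S, (H : Set (Fin l → ℂ))) '' {S | S ⊆ A})).Finite :=
    h2.preimage (fun a _ b _ hab => SetLike.coe_injective hab)
  refine h3.subset ?_
  rintro X ⟨hne, S, hS, hSne, hXeq⟩
  exact ⟨S, hS, hXeq.symm⟩

/-- The `Y`-closure `𝒜̄^Y` is a `Y`-closed arrangement (a finite set of
affine hyperplanes) containing `𝒜`, and it is minimal among all such: every finite
`Y`-closed set `ℬ` of affine hyperplanes with `𝒜 ⊆ ℬ` satisfies `𝒜̄^Y ⊆ ℬ`. -/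
theorem YClosure_isMinimal_YClosed {l : ℕ}
    (A : Set (AffineSubspace ℂ (Fin l → ℂ))) (hAfin : A.Finite)
    (hAhyp : ∀ H ∈ A, IsAffHyperplane H)
    (Y : Submodule ℂ (Fin l → ℂ)) (hY : Module.finrank ℂ Y = 1) :
    (YClosure A Y).Finite ∧
    (∀ H ∈ YClosure A Y, IsAffHyperplane H) ∧
    A ⊆ YClosure A Y ∧
    IsYClosed (YClosure A Y) Y ∧
    (∀ B : Set (AffineSubspace ℂ (Fin l → ℂ)), B.Finite →
      (∀ H ∈ B, IsAffHyperplane H) → IsYClosed B Y → A ⊆ B → YClosure A Y ⊆ B) := by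
  -- finiteness
  have hfin : (YClosure A Y).Finite := by
    apply Set.Finite.union hAfin
    have h2 : ((fun X : AffineSubspace ℂ (Fin l → ℂ) => affSumSet X Y) ''
        interPoset2 A).Finite :=
      (((interPoset_finite hAfin).subset (Set.sep_subset _ _)).image _)
    have h3 : ((fun H : AffineSubspace ℂ (Fin l → ℂ) => (H : Set (Fin l → ℂ))) ⁻¹'
        ((fun X : AffineSubspace ℂ (Fin l → ℂ) => affSumSet X Y) ''
        interPoset2 A)).Finite :=
      h2.preimage (fun a _ b _ hab => SetLike.coe_injective hab)
    refine h3.subset ?_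
    rintro H ⟨hc1, X, hX2, hHeq⟩
    exact ⟨X, hX2, hHeq.symm⟩
  -- hyperplanes
  have hhyp : ∀ H ∈ YClosure A Y, IsAffHyperplane H := by
    rintro H (hH | ⟨hc1, X, hX2, hHeq⟩)
    · exact hAhyp H hH
    · obtain ⟨x, hx⟩ := hX2.1.1
      refine ⟨⟨x, ?_⟩, hc1⟩
      rw [hHeq]
      exact ⟨x, hx, 0, Y.zero_mem, (add_zero x).symm⟩
  refine ⟨hfin, hhyp, Set.subset_union_left, ?_, ?_⟩
  · -- IsYClosed
    rintro X ⟨⟨hne, S, hS, hSne, hXeq⟩, hco2⟩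
    obtain ⟨p, hp⟩ := hne
    by_cases hYle : Y ≤ X.direction
    · exact ⟨X, ⟨⟨p, hp⟩, S, hS, hSne, hXeq⟩, (affSumSet_eq_self hp hYle).symm⟩
    · set W := AffineSubspace.mk' p (X.direction ⊔ Y) with hWdef
      have hWcoe : (W : Set (Fin l → ℂ)) = affSumSet X Y := (affSumSet_eq_mk' hp).symm
      have hWco : affCodim W = 1 := by
        show Module.finrank ℂ ((Fin l → ℂ) ⧸ W.direction) = 1
        rw [hWdef, AffineSubspace.direction_mk']
        exact finrank_quot_sup hco2 hY hYle
      have hWne : (W : Set (Fin l → ℂ)).Nonempty := ⟨p, AffineSubspace.self_mem_mk' p _⟩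
      by_cases hcase : ∃ H ∈ S, Y ≤ H.direction
      · obtain ⟨H, hHS, hYH⟩ := hcase
        have hXleH : X ≤ H := by
          intro z hz
          have hz' : z ∈ ⋂ K ∈ S, (K : Set (Fin l → ℂ)) := by rw [← hXeq]; exact hz
          exact Set.mem_iInter₂.mp hz' H hHS
        have hWleH : W ≤ H := by
          intro z hz
          have hz' : z ∈ affSumSet X Y := by rw [← hWcoe]; exact hz
          obtain ⟨x, hx, y, hy, rfl⟩ := hz'
          have : y +ᵥ x ∈ H := AffineSubspace.vadd_mem_of_mem_direction (hYH hy) (hXleH hx)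
          simpa [vadd_eq_add, add_comm] using this
        have hWH : W = H :=
          eq_of_le_of_affCodim_eq hWne hWleH (by rw [hWco, (hhyp H (hS hHS)).2])
        refine ⟨H, ⟨(hhyp H (hS hHS)).1, {H}, ?_, ⟨H, rfl⟩, by simp⟩, ?_⟩
        · simpa using hS hHS
        · rw [← hWH, hWcoe]
      · push_neg at hcase
        have hSA : S ⊆ A := by
          intro H hH
          rcases hS hH with h | ⟨hc1, X', hX', hHeq⟩
          · exact h
          · exact absurd (Y_le_direction_of_affSumSet hHeq hX'.1.1.some_mem)
              (hcase H hH)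
        have hX2A : X ∈ interPoset2 A := ⟨⟨⟨p, hp⟩, S, hSA, hSne, hXeq⟩, hco2⟩
        have hWmem : W ∈ YClosure A Y := Or.inr ⟨hWco, X, hX2A, hWcoe⟩
        exact ⟨W, ⟨hWne, {W}, by simpa using hWmem, ⟨W, rfl⟩, by simp⟩, hWcoe⟩
  · -- minimality
    rintro B hBfin hBhyp hBclosed hAB H (hH | ⟨hc1, X, hX2, hHeq⟩)
    · exact hAB hH
    · have hX2B : X ∈ interPoset2 B := by
        obtain ⟨⟨hne, S, hS, hSne, hXeq⟩, hc⟩ := hX2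
        exact ⟨⟨hne, S, fun K hK => hAB (hS hK), hSne, hXeq⟩, hc⟩
      obtain ⟨W, hW, hWeq⟩ := hBclosed X hX2B
      have hWH : W = H := SetLike.coe_injective (by rw [hWeq, hHeq])
      rw [← hWH]
      exact mem_of_interPoset_codim_one hBhyp hW (by rw [hWH]; exact hc1)
end
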